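/- arXiv:2506.14929 — 2 statements merged into one kernel-verified Lean document; each statement's English description precedes it below -/
import Mathlib

section
/- The expected loss E_{Φ ~ GS(α)}[L(Φ, Ψ)], viewed as a function of the parameter matrix α (with all entries α_{i,j} ≥ ν > 0), is L-smooth with smoothness constant L = nGN(τ+1)/(τ²ν²); i.e., for all α, α', f(α') − f(α) ≤ ⟨∇f(α), α' − α⟩ + (L/2)‖α' − α‖². -/
/-!
Restrict the loss to the segment `a + t • v`, `v = a' - a`, `t ∈ [0, 1]`. There the logits
`x t i j = (log (a + t • v) (i, j) + g i j) / τ` move with velocity `y = v / (τ (a + t • v))` and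
acceleration `-τ y ^ 2`, so `y ^ 2 + |y'| ≤ (τ + 1) v ^ 2 / (τ ν) ^ 2` coordinatewise.

For independent softmax laws the derivative of `E[L]` along a logit path is `E[L s]`, with `s` the
score, and the second derivative is `E[L (s ^ 2 + s')]`. Independence kills the cross terms of
`E[s ^ 2]`, so `E[s ^ 2] = ∑ i, Var_i y`, whence
`|E[L (s ^ 2 + s')]| ≤ 2 G ∑ i, E_i (y ^ 2 + |y'|)`.
Taylor's formula then gives smoothness with constant `G (τ + 1) / (τ ν) ^ 2`, which is at most the
stated one once `n N ≥ 2`. When `N ≤ 1` the softmax is identically `1` and the loss is constant,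
and when `n = 0` the parameter space is a point.
-/

open Finset RealInnerProductSpace

section WeightedVariance

variable {κ : Type*} [Fintype κ] {q : κ → ℝ}

lemma sum_mul_sub_mean (hq : ∑ j, q j = 1) (y : κ → ℝ) :
    ∑ j, q j * (y j - ∑ l, q l * y l) = 0 := by
  simp only [mul_sub, sum_sub_distrib, ← sum_mul, hq, one_mul, sub_self]

lemma sum_mul_sub_mean_mul_self (hq : ∑ j, q j = 1) (y : κ → ℝ) :
    ∑ j, q j * (y j - ∑ l, q l * y l) * y j = ∑ j, q j * (y j - ∑ l, q l * y l) ^ 2 := by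
  set S := ∑ l, q l * y l
  calc ∑ j, q j * (y j - S) * y j = ∑ j, q j * (y j - S) ^ 2 + S * ∑ j, q j * (y j - S) := by
        rw [mul_sum, ← sum_add_distrib]
        exact sum_congr rfl fun j _ => by ring
    _ = ∑ j, q j * (y j - S) ^ 2 := by rw [sum_mul_sub_mean hq, mul_zero, add_zero]

lemma sum_mul_sub_mean_sq_le (hq : ∑ j, q j = 1) (y : κ → ℝ) :
    ∑ j, q j * (y j - ∑ l, q l * y l) ^ 2 ≤ ∑ j, q j * y j ^ 2 := by
  have h : ∑ j, q j * (y j - ∑ l, q l * y l) * y j =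
      ∑ j, q j * y j ^ 2 - (∑ l, q l * y l) * ∑ l, q l * y l := by
    rw [mul_sum, ← sum_sub_distrib]
    exact sum_congr rfl fun j _ => by ring
  rw [← sum_mul_sub_mean_mul_self hq, h]
  nlinarith [mul_self_nonneg (∑ l, q l * y l)]

end WeightedVariance

section Softmax

variable {κ : Type*} [Fintype κ]

noncomputable def softmax (x : κ → ℝ) (j : κ) : ℝ := Real.exp (x j) / ∑ l, Real.exp (x l)

lemma sum_exp_pos (x : κ → ℝ) (j : κ) : 0 < ∑ l, Real.exp (x l) :=
  sum_pos (fun _ _ => Real.exp_pos _) ⟨j, mem_univ j⟩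

lemma softmax_pos (x : κ → ℝ) (j : κ) : 0 < softmax x j :=
  div_pos (Real.exp_pos _) (sum_exp_pos x j)

lemma sum_softmax [Nonempty κ] (x : κ → ℝ) : ∑ j, softmax x j = 1 := by
  obtain ⟨j⟩ := ‹Nonempty κ›
  simp only [softmax, ← sum_div, div_self (sum_exp_pos x j).ne']

lemma softmax_le_one (x : κ → ℝ) (j : κ) : softmax x j ≤ 1 :=
  div_le_one_of_le₀ (single_le_sum (fun l _ => (Real.exp_pos (x l)).le) (mem_univ j))
    (sum_exp_pos x j).le

lemma softmax_of_subsingleton [Subsingleton κ] (x : κ → ℝ) : softmax x = 1 := by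
  ext j
  rw [softmax, Fintype.sum_subsingleton _ j, div_self (Real.exp_pos _).ne', Pi.one_apply]

lemma differentiable_softmax (j : κ) : Differentiable ℝ fun x : κ → ℝ => softmax x j := by
  simp only [softmax, div_eq_mul_inv]
  fun_prop (disch := exact fun x => (sum_exp_pos x j).ne')

lemma hasDerivAt_softmax {x : ℝ → κ → ℝ} {y : κ → ℝ} {t : ℝ}
    (hx : ∀ j, HasDerivAt (fun s => x s j) (y j) t) (j : κ) :
    HasDerivAt (fun s => softmax (x s) j)
      (softmax (x t) j * (y j - ∑ l, softmax (x t) l * y l)) t := by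
  have hZ := HasDerivAt.fun_sum fun l (_ : l ∈ univ) => (hx l).exp
  have hZ0 := (sum_exp_pos (x t) j).ne'
  refine ((hx j).exp.div hZ hZ0).congr_deriv ?_
  simp only [softmax, div_mul_eq_mul_div, ← sum_div]
  field_simp

end Softmax

open Set in
theorem sub_le_deriv_add_of_deriv2_le {φ φ' φ'' : ℝ → ℝ} {C : ℝ}
    (hφ : ∀ t ∈ Icc (0 : ℝ) 1, HasDerivAt φ (φ' t) t)
    (hφ' : ∀ t ∈ Icc (0 : ℝ) 1, HasDerivAt φ' (φ'' t) t)
    (hC : ∀ t ∈ Icc (0 : ℝ) 1, φ'' t ≤ C) :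
    φ 1 - φ 0 ≤ φ' 0 + C / 2 := by
  have hφ'_le : ∀ t ∈ Icc (0 : ℝ) 1, φ' t ≤ φ' 0 + C * t := by
    refine image_le_of_deriv_right_le_deriv_boundary
      (fun t ht => (hφ' t ht).continuousAt.continuousWithinAt)
      (fun t ht => (hφ' t (Ico_subset_Icc_self ht)).hasDerivWithinAt) (by simp)
      (by fun_prop) (fun t _ => ?_) (fun t ht => hC t (Ico_subset_Icc_self ht))
    simpa using ((hasDerivAt_id t).const_mul C).const_add (φ' 0) |>.hasDerivWithinAt
  have hB (t : ℝ) :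
      HasDerivAt (fun t => φ 0 + φ' 0 * t + C / 2 * t ^ 2) (φ' 0 + C * t) t := by
    refine ((((hasDerivAt_id t).const_mul (φ' 0)).const_add (φ 0)).fun_add
      ((hasDerivAt_pow 2 t).const_mul (C / 2))).congr_deriv ?_
    push_cast
    ring
  have := image_le_of_deriv_right_le_deriv_boundary
    (fun t ht => (hφ t ht).continuousAt.continuousWithinAt)
    (fun t ht => (hφ t (Ico_subset_Icc_self ht)).hasDerivWithinAt)
    (by simp) (by fun_prop) (fun t _ => (hB t).hasDerivWithinAt)
    (fun t ht => hφ'_le t (Ico_subset_Icc_self ht)) (right_mem_Icc.2 zero_le_one)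
  linarith

section LogAffine

variable {c d e τ t : ℝ}

lemma hasDerivAt_log_affine_div (h : 0 < c + t * d) :
    HasDerivAt (fun s => (Real.log (c + s * d) + e) / τ) (d / (τ * (c + t * d))) t := by
  refine ((((hasDerivAt_id' t).mul_const d).const_add c).log h.ne').add_const e
    |>.div_const τ |>.congr_deriv ?_
  field_simp

lemma hasDerivAt_div_affine (hτ : τ ≠ 0) (h : c + t * d ≠ 0) :
    HasDerivAt (fun s => d / (τ * (c + s * d))) (-τ * (d / (τ * (c + t * d))) ^ 2) t := by
  refine (((hasDerivAt_id' t).mul_const d).const_add c).const_mul τ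
    |>.inv (mul_ne_zero hτ h) |>.const_mul d |>.congr_deriv ?_
  field_simp

lemma sq_add_abs_neg_mul_sq_le {ν X : ℝ} (hτ : 0 < τ) (hν : 0 < ν) (hX : ν ≤ X) :
    (d / (τ * X)) ^ 2 + |-τ * (d / (τ * X)) ^ 2| ≤ (τ + 1) / (τ ^ 2 * ν ^ 2) * d ^ 2 := by
  calc (d / (τ * X)) ^ 2 + |-τ * (d / (τ * X)) ^ 2| = (τ + 1) * (d ^ 2 / (τ * X) ^ 2) := by
        rw [abs_of_nonpos (mul_nonpos_of_nonpos_of_nonneg (by linarith) (sq_nonneg _)), div_pow]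
        ring
    _ ≤ (τ + 1) * (d ^ 2 / (τ * ν) ^ 2) := by gcongr
    _ = (τ + 1) / (τ ^ 2 * ν ^ 2) * d ^ 2 := by ring

end LogAffine

section ProdExpect

variable {ι κ : Type*} [Fintype ι] [Fintype κ]

/-- The derivative of `log ∏ i, q i (Φ i)` when the logits of `q i` move in the direction `y`. -/
noncomputable def score (q y : ι → κ → ℝ) (Φ : ι → κ) : ℝ :=
  ∑ i, (y i (Φ i) - ∑ j, q i j * y i j)

variable [DecidableEq ι]

/-- The expectation of `F` when the coordinates `Φ i` are independent with laws `q i`. -/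
noncomputable def prodExpect (q : ι → κ → ℝ) (F : (ι → κ) → ℝ) : ℝ :=
  ∑ Φ : ι → κ, (∏ i, q i (Φ i)) * F Φ

variable {q : ι → κ → ℝ}

lemma prodExpect_prod (h : ι → κ → ℝ) :
    prodExpect q (fun Φ => ∏ i, h i (Φ i)) = ∏ i, ∑ j, q i j * h i j := by
  simp only [prodExpect, ← prod_mul_distrib, Fintype.prod_sum]

lemma prodExpect_add (F F' : (ι → κ) → ℝ) :
    prodExpect q (fun Φ => F Φ + F' Φ) = prodExpect q F + prodExpect q F' := by
  simp only [prodExpect, mul_add, sum_add_distrib]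

lemma prodExpect_sum {α : Type*} (s : Finset α) (F : α → (ι → κ) → ℝ) :
    prodExpect q (fun Φ => ∑ a ∈ s, F a Φ) = ∑ a ∈ s, prodExpect q (F a) := by
  simp only [prodExpect, mul_sum]
  exact sum_comm

lemma prodExpect_const_mul (c : ℝ) (F : (ι → κ) → ℝ) :
    prodExpect q (fun Φ => c * F Φ) = c * prodExpect q F := by
  simp only [prodExpect, mul_sum, mul_left_comm]

lemma prodExpect_mono (hq : ∀ i j, 0 ≤ q i j) {F F' : (ι → κ) → ℝ} (h : ∀ Φ, F Φ ≤ F' Φ) :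
    prodExpect q F ≤ prodExpect q F' :=
  sum_le_sum fun Φ _ => mul_le_mul_of_nonneg_left (h Φ) (prod_nonneg fun i _ => hq i (Φ i))

lemma abs_prodExpect_le (hq : ∀ i j, 0 ≤ q i j) (F : (ι → κ) → ℝ) :
    |prodExpect q F| ≤ prodExpect q (fun Φ => |F Φ|) := by
  refine (abs_sum_le_sum_abs _ _).trans_eq (sum_congr rfl fun Φ _ => ?_)
  rw [abs_mul, abs_of_nonneg (prod_nonneg fun i _ => hq i (Φ i))]

lemma prodExpect_const (hq : ∀ i, ∑ j, q i j = 1) (c : ℝ) : prodExpect q (fun _ => c) = c := by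
  rw [prodExpect, ← sum_mul, ← Fintype.prod_sum, prod_congr rfl fun i _ => hq i, prod_const_one,
    one_mul]

lemma prodExpect_apply (hq : ∀ i, ∑ j, q i j = 1) (i : ι) (y : κ → ℝ) :
    prodExpect q (fun Φ => y (Φ i)) = ∑ j, q i j * y j := by
  have h := prodExpect_prod (q := q) fun k j => if k = i then y j else 1
  simp only [prod_ite_eq', mem_univ, if_true] at h
  rw [h, prod_eq_single i (fun k _ hk => by simp [hk, hq]) (by simp)]
  simp only [↓reduceIte]

lemma prodExpect_apply_mul_apply (hq : ∀ i, ∑ j, q i j = 1) {i i' : ι} (hii' : i ≠ i')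
    (y y' : κ → ℝ) :
    prodExpect q (fun Φ => y (Φ i) * y' (Φ i')) = (∑ j, q i j * y j) * ∑ j, q i' j * y' j := by
  have h := prodExpect_prod (q := q) fun k j =>
    (if k = i then y j else 1) * (if k = i' then y' j else 1)
  simp only [prod_mul_distrib, prod_ite_eq', mem_univ, if_true] at h
  rw [h, ← mul_prod_erase _ _ (mem_univ i),
    ← mul_prod_erase _ _ (mem_erase.2 ⟨hii'.symm, mem_univ i'⟩), prod_eq_one fun k hk => ?_]
  · simp [hii', hii'.symm]
  · obtain ⟨hki', hki, -⟩ := mem_erase.1 hk |>.imp_right mem_erase.1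
    simp [hki, hki', hq]

lemma prodExpect_sum_sq (hq : ∀ i, ∑ j, q i j = 1) {w : ι → κ → ℝ}
    (hw : ∀ i, ∑ j, q i j * w i j = 0) :
    prodExpect q (fun Φ => (∑ i, w i (Φ i)) ^ 2) = ∑ i, ∑ j, q i j * w i j ^ 2 := by
  simp only [sq, sum_mul_sum, prodExpect_sum]
  refine sum_congr rfl fun i _ => ?_
  rw [sum_eq_single i (fun i' _ hi' => by
      rw [prodExpect_apply_mul_apply hq (Ne.symm hi'), hw, zero_mul]) (by simp),
    prodExpect_apply hq i fun j => w i j * w i j]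

lemma prodExpect_score_sq (hq : ∀ i, ∑ j, q i j = 1) (y : ι → κ → ℝ) :
    prodExpect q (fun Φ => score q y Φ ^ 2) =
      ∑ i, ∑ j, q i j * (y i j - ∑ l, q i l * y i l) ^ 2 :=
  prodExpect_sum_sq hq (w := fun i j => y i j - ∑ l, q i l * y i l) fun i =>
    sum_mul_sub_mean (hq i) (y i)

lemma prodExpect_abs_score_le (hq0 : ∀ i j, 0 ≤ q i j) (hq : ∀ i, ∑ j, q i j = 1)
    (z : ι → κ → ℝ) :
    prodExpect q (fun Φ => |score q z Φ|) ≤ 2 * ∑ i, ∑ j, q i j * |z i j| := by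
  have hpt (Φ : ι → κ) : |score q z Φ| ≤ ∑ i, (|z i (Φ i)| + ∑ j, q i j * |z i j|) := by
    refine (abs_sum_le_sum_abs _ _).trans <| sum_le_sum fun i _ => (abs_sub _ _).trans ?_
    gcongr
    refine (abs_sum_le_sum_abs _ _).trans_eq <| sum_congr rfl fun j _ => ?_
    rw [abs_mul, abs_of_nonneg (hq0 i j)]
  refine (prodExpect_mono hq0 hpt).trans_eq ?_
  rw [prodExpect_sum, mul_sum]
  refine sum_congr rfl fun i _ => ?_
  rw [prodExpect_add, prodExpect_apply hq i fun j => |z i j|, prodExpect_const hq]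
  ring

theorem abs_prodExpect_score_sq_add_le (hq0 : ∀ i j, 0 ≤ q i j) (hq : ∀ i, ∑ j, q i j = 1)
    (y z : ι → κ → ℝ) {L : (ι → κ) → ℝ} {G : ℝ} (hG : 0 ≤ G) (hL : ∀ Φ, |L Φ| ≤ G) :
    |prodExpect q (fun Φ => (score q y Φ ^ 2 + score q z Φ -
        ∑ i, ∑ j, q i j * (y i j - ∑ l, q i l * y i l) ^ 2) * L Φ)|
      ≤ 2 * G * ∑ i, ∑ j, q i j * (y i j ^ 2 + |z i j|) := by
  set V := ∑ i, ∑ j, q i j * (y i j - ∑ l, q i l * y i l) ^ 2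
  have hV0 : 0 ≤ V :=
    sum_nonneg fun i _ => sum_nonneg fun j _ => mul_nonneg (hq0 i j) (sq_nonneg _)
  have hV : V ≤ ∑ i, ∑ j, q i j * y i j ^ 2 :=
    sum_le_sum fun i _ => sum_mul_sub_mean_sq_le (hq i) _
  have hpt (Φ : ι → κ) : |(score q y Φ ^ 2 + score q z Φ - V) * L Φ| ≤
      G * (score q y Φ ^ 2 + |score q z Φ| + V) := by
    rw [abs_mul, mul_comm]
    refine mul_le_mul (hL Φ) ((abs_sub _ _).trans ?_) (abs_nonneg _) hG
    rw [abs_of_nonneg hV0]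
    gcongr
    exact (abs_add_le _ _).trans_eq (by rw [abs_of_nonneg (sq_nonneg _)])
  refine (abs_prodExpect_le hq0 _).trans <| (prodExpect_mono hq0 hpt).trans ?_
  rw [prodExpect_const_mul, prodExpect_add, prodExpect_add, prodExpect_score_sq hq,
    prodExpect_const hq]
  calc G * (V + prodExpect q (fun Φ => |score q z Φ|) + V)
      ≤ G * (2 * ∑ i, ∑ j, q i j * y i j ^ 2 + 2 * ∑ i, ∑ j, q i j * |z i j|) :=
        mul_le_mul_of_nonneg_left (by linarith [prodExpect_abs_score_le hq0 hq z]) hG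
    _ = 2 * G * ∑ i, ∑ j, q i j * (y i j ^ 2 + |z i j|) := by
        simp only [mul_add, sum_add_distrib]
        ring

end ProdExpect

section SoftmaxPath

variable {ι κ : Type*} [Fintype ι] [Fintype κ] {x : ℝ → ι → κ → ℝ} {t : ℝ}

lemma hasDerivAt_score_softmax [Nonempty κ] {y : ℝ → ι → κ → ℝ} {z : ι → κ → ℝ}
    (hx : ∀ i j, HasDerivAt (fun s => x s i j) (y t i j) t)
    (hy : ∀ i j, HasDerivAt (fun s => y s i j) (z i j) t) (Φ : ι → κ) :
    HasDerivAt (fun s => score (fun i => softmax (x s i)) (y s) Φ)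
      (score (fun i => softmax (x t i)) z Φ -
        ∑ i, ∑ j, softmax (x t i) j * (y t i j - ∑ l, softmax (x t i) l * y t i l) ^ 2) t := by
  refine (HasDerivAt.fun_sum fun i _ => (hy i (Φ i)).sub <| HasDerivAt.fun_sum fun j _ =>
    (hasDerivAt_softmax (hx i) j).mul (hy i j)).congr_deriv ?_
  rw [score, ← sum_sub_distrib]
  refine sum_congr rfl fun i _ => ?_
  rw [← sum_mul_sub_mean_mul_self (sum_softmax _), sub_sub, ← sum_add_distrib]
  congr 2
  ext j
  ring

variable [DecidableEq ι]

lemma hasDerivAt_prod_softmax {y : ι → κ → ℝ}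
    (hx : ∀ i j, HasDerivAt (fun s => x s i j) (y i j) t) (Φ : ι → κ) :
    HasDerivAt (fun s => ∏ i, softmax (x s i) (Φ i))
      ((∏ i, softmax (x t i) (Φ i)) * score (fun i => softmax (x t i)) y Φ) t := by
  refine (HasDerivAt.fun_finsetProd fun i _ => hasDerivAt_softmax (hx i) (Φ i)).congr_deriv ?_
  rw [score, mul_sum]
  refine sum_congr rfl fun i _ => ?_
  rw [smul_eq_mul, ← mul_assoc, prod_erase_mul _ _ (mem_univ i)]

lemma hasDerivAt_prodExpect_softmax_of_hasDerivAt {y : ι → κ → ℝ} {F : ℝ → (ι → κ) → ℝ}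
    {F' : (ι → κ) → ℝ} (hx : ∀ i j, HasDerivAt (fun s => x s i j) (y i j) t)
    (hF : ∀ Φ, HasDerivAt (fun s => F s Φ) (F' Φ) t) :
    HasDerivAt (fun s => prodExpect (fun i => softmax (x s i)) (F s))
      (prodExpect (fun i => softmax (x t i))
        (fun Φ => score (fun i => softmax (x t i)) y Φ * F t Φ + F' Φ)) t :=
  (HasDerivAt.fun_sum fun Φ _ => (hasDerivAt_prod_softmax hx Φ).mul (hF Φ)).congr_deriv <|
    sum_congr rfl fun Φ _ => by ring

lemma hasDerivAt_prodExpect_softmax {y : ι → κ → ℝ}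
    (hx : ∀ i j, HasDerivAt (fun s => x s i j) (y i j) t) (L : (ι → κ) → ℝ) :
    HasDerivAt (fun s => prodExpect (fun i => softmax (x s i)) L)
      (prodExpect (fun i => softmax (x t i)) fun Φ =>
        score (fun i => softmax (x t i)) y Φ * L Φ) t :=
  (hasDerivAt_prodExpect_softmax_of_hasDerivAt hx fun Φ => hasDerivAt_const t (L Φ)).congr_deriv
    (by simp only [add_zero])

lemma hasDerivAt_prodExpect_softmax_score [Nonempty κ] {y : ℝ → ι → κ → ℝ} {z : ι → κ → ℝ}
    (hx : ∀ i j, HasDerivAt (fun s => x s i j) (y t i j) t)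
    (hy : ∀ i j, HasDerivAt (fun s => y s i j) (z i j) t) (L : (ι → κ) → ℝ) :
    HasDerivAt (fun s => prodExpect (fun i => softmax (x s i))
        (fun Φ => score (fun i => softmax (x s i)) (y s) Φ * L Φ))
      (prodExpect (fun i => softmax (x t i)) fun Φ =>
        (score (fun i => softmax (x t i)) (y t) Φ ^ 2 + score (fun i => softmax (x t i)) z Φ -
          ∑ i, ∑ j, softmax (x t i) j * (y t i j - ∑ l, softmax (x t i) l * y t i l) ^ 2) *
          L Φ) t := by
  refine (hasDerivAt_prodExpect_softmax_of_hasDerivAt hx fun Φ =>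
    (hasDerivAt_score_softmax hx hy Φ).mul_const (L Φ)).congr_deriv ?_
  congr 1
  ext Φ
  ring

lemma differentiable_prodExpect_softmax (L : (ι → κ) → ℝ) :
    Differentiable ℝ fun x : ι → κ → ℝ => prodExpect (fun i => softmax (x i)) L := by
  have := differentiable_softmax (κ := κ)
  unfold prodExpect
  fun_prop

open Set in
theorem prodExpect_softmax_sub_le [Nonempty κ] {y z : ℝ → ι → κ → ℝ} {L : (ι → κ) → ℝ}
    {G B : ℝ} (hG : 0 ≤ G) (hL : ∀ Φ, |L Φ| ≤ G)
    (hx : ∀ t ∈ Icc (0 : ℝ) 1, ∀ i j, HasDerivAt (fun s => x s i j) (y t i j) t)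
    (hy : ∀ t ∈ Icc (0 : ℝ) 1, ∀ i j, HasDerivAt (fun s => y s i j) (z t i j) t)
    (hB : ∀ t ∈ Icc (0 : ℝ) 1, ∑ i, ∑ j, (y t i j ^ 2 + |z t i j|) ≤ B) :
    prodExpect (fun i => softmax (x 1 i)) L - prodExpect (fun i => softmax (x 0 i)) L ≤
      prodExpect (fun i => softmax (x 0 i))
        (fun Φ => score (fun i => softmax (x 0 i)) (y 0) Φ * L Φ) + G * B := by
  have key := sub_le_deriv_add_of_deriv2_le (C := 2 * G * B)
    (fun t ht => hasDerivAt_prodExpect_softmax (hx t ht) L)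
    (fun t ht => hasDerivAt_prodExpect_softmax_score (hx t ht) (hy t ht) L)
    (fun t ht => le_of_abs_le <| (abs_prodExpect_score_sq_add_le
      (fun i j => (softmax_pos _ _).le) (fun i => sum_softmax _) _ _ hG hL).trans ?_)
  · linarith
  · refine mul_le_mul_of_nonneg_left ((sum_le_sum fun i _ => sum_le_sum fun j _ => ?_).trans
      (hB t ht)) (by positivity)
    exact mul_le_of_le_one_left (by positivity) (softmax_le_one _ _)

end SoftmaxPath

section ExpectedLoss

variable {ι κ : Type*} [Fintype ι] [Fintype κ] [DecidableEq ι]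

/-- `E_{Φ ~ GS(a)}[L Φ]`: the probability of `Φ i = j` is the softmax of the logits
`(log a (i, j) + g i j) / τ`, with `g` the Gumbel noise and `τ` the temperature. -/
noncomputable def expectedLoss (τ : ℝ) (g : ι → κ → ℝ) (L : (ι → κ) → ℝ)
    (a : EuclideanSpace ℝ (ι × κ)) : ℝ :=
  prodExpect (fun i => softmax fun j => (Real.log (a (i, j)) + g i j) / τ) L

lemma expectedLoss_of_subsingleton [Subsingleton κ] (τ : ℝ) (g : ι → κ → ℝ)
    (L : (ι → κ) → ℝ) : expectedLoss τ g L = fun _ => ∑ Φ, L Φ := by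
  ext a
  simp only [expectedLoss, softmax_of_subsingleton, prodExpect, Pi.one_apply, prod_const_one,
    one_mul]

lemma differentiableAt_expectedLoss (τ : ℝ) (g : ι → κ → ℝ) (L : (ι → κ) → ℝ)
    {a : EuclideanSpace ℝ (ι × κ)} (ha : ∀ ij, a ij ≠ 0) :
    DifferentiableAt ℝ (expectedLoss τ g L) a :=
  (differentiable_prodExpect_softmax L).differentiableAt.comp a
    (by fun_prop (disch := exact ha _))

open Set in
theorem expectedLoss_sub_le [Nonempty κ] {τ ν G : ℝ} (hτ : 0 < τ) (hν : 0 < ν) (hG : 0 ≤ G)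
    (g : ι → κ → ℝ) {L : (ι → κ) → ℝ} (hL : ∀ Φ, |L Φ| ≤ G) {a a' : EuclideanSpace ℝ (ι × κ)}
    (ha : ∀ ij, ν ≤ a ij) (ha' : ∀ ij, ν ≤ a' ij) :
    expectedLoss τ g L a' - expectedLoss τ g L a ≤
      ⟪gradient (expectedLoss τ g L) a, a' - a⟫ +
        G * ((τ + 1) / (τ ^ 2 * ν ^ 2) * ‖a' - a‖ ^ 2) := by
  set v := a' - a
  set x : ℝ → ι → κ → ℝ := fun s i j => (Real.log (a (i, j) + s * v (i, j)) + g i j) / τ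
  set y : ℝ → ι → κ → ℝ := fun s i j => v (i, j) / (τ * (a (i, j) + s * v (i, j)))
  have hline (s : ℝ) :
      expectedLoss τ g L (a + s • v) = prodExpect (fun i => softmax (x s i)) L := by
    simp [expectedLoss, x]
  have hX : ∀ t ∈ Icc (0 : ℝ) 1, ∀ i j, ν ≤ a (i, j) + t * v (i, j) := fun t ht i j => by
    have := ha (i, j)
    have := ha' (i, j)
    simp only [v, PiLp.sub_apply]
    nlinarith [ht.1, ht.2]
  have hx : ∀ t ∈ Icc (0 : ℝ) 1, ∀ i j, HasDerivAt (fun s => x s i j) (y t i j) t :=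
    fun t ht i j => hasDerivAt_log_affine_div (hν.trans_le (hX t ht i j))
  have hy : ∀ t ∈ Icc (0 : ℝ) 1, ∀ i j, HasDerivAt (fun s => y s i j) (-τ * y t i j ^ 2) t :=
    fun t ht i j => hasDerivAt_div_affine hτ.ne' (hν.trans_le (hX t ht i j)).ne'
  have hgrad : ⟪gradient (expectedLoss τ g L) a, v⟫ = prodExpect (fun i => softmax (x 0 i))
      (fun Φ => score (fun i => softmax (x 0 i)) (y 0) Φ * L Φ) := by
    rw [inner_gradient_left, ← (differentiableAt_expectedLoss τ g L fun ij =>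
      (hν.trans_le (ha ij)).ne').lineDeriv_eq_fderiv]
    refine HasLineDerivAt.lineDeriv ?_
    simpa only [HasLineDerivAt, hline] using
      hasDerivAt_prodExpect_softmax (hx 0 ⟨le_rfl, zero_le_one⟩) L
  have hB (t : ℝ) (ht : t ∈ Icc (0 : ℝ) 1) : ∑ i, ∑ j, (y t i j ^ 2 + |-τ * y t i j ^ 2|) ≤
      (τ + 1) / (τ ^ 2 * ν ^ 2) * ‖v‖ ^ 2 := by
    rw [EuclideanSpace.real_norm_sq_eq, Fintype.sum_prod_type, mul_sum]
    exact sum_le_sum fun i _ => (sum_le_sum fun j _ =>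
      sq_add_abs_neg_mul_sq_le hτ hν (hX t ht i j)).trans_eq (mul_sum _ _ _).symm
  have key := prodExpect_softmax_sub_le hG hL hx hy hB
  rwa [← hline 1, ← hline 0, one_smul, zero_smul, add_zero, add_sub_cancel, ← hgrad] at key

end ExpectedLoss

/-- L-smoothness of the expected loss `E_{Φ~GS(α)}[L(Φ,Ψ)]` as a function of the parameter
matrix `α` (entries `≥ ν > 0`), with smoothness constant `L = nGN(τ+1)/(τ²ν²)`. -/
theorem expected_loss_L_smooth
    (n N : ℕ) (τ ν G : ℝ) (hτ : 0 < τ) (hν : 0 < ν) (hG : 0 ≤ G)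
    (g : Fin n → Fin N → ℝ)
    (Lf : (Fin n → Fin N) → ℝ) (hLf : ∀ Φ, |Lf Φ| ≤ G)
    (p : EuclideanSpace ℝ (Fin n × Fin N) → Fin n → Fin N → ℝ)
    (hp : ∀ a i j, p a i j =
      Real.exp ((Real.log (a (i, j)) + g i j) / τ) /
        ∑ l : Fin N, Real.exp ((Real.log (a (i, l)) + g i l) / τ))
    (f : EuclideanSpace ℝ (Fin n × Fin N) → ℝ)
    (hf : ∀ a, f a = ∑ Φ : Fin n → Fin N, (∏ i, p a i (Φ i)) * Lf Φ) :
    ∀ a a' : EuclideanSpace ℝ (Fin n × Fin N),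
      (∀ ij, ν ≤ a ij) → (∀ ij, ν ≤ a' ij) →
      f a' - f a ≤ ⟪gradient f a, a' - a⟫ +
        (n * G * N * (τ + 1) / (τ ^ 2 * ν ^ 2)) / 2 * ‖a' - a‖ ^ 2 := by
  intro a a' ha ha'
  obtain rfl : f = expectedLoss τ g Lf := funext fun b => by simp only [hf, hp]; rfl
  rcases le_or_gt N 1 with hN | hN
  · have : Subsingleton (Fin N) := Fin.subsingleton_iff_le_one.2 hN
    rw [expectedLoss_of_subsingleton, gradient_fun_const, inner_zero_left, sub_self, zero_add]
    positivity
  have : Nonempty (Fin N) := ⟨⟨0, by omega⟩⟩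
  have hnorm : 2 * ‖a' - a‖ ^ 2 ≤ n * N * ‖a' - a‖ ^ 2 := by
    rcases n.eq_zero_or_pos with rfl | hn
    · simp [Subsingleton.elim a' a]
    · gcongr
      exact_mod_cast Nat.mul_le_mul hn hN
  calc _ ≤ _ := expectedLoss_sub_le hτ hν hG g hLf ha ha'
    _ ≤ ⟪gradient (expectedLoss τ g Lf) a, a' - a⟫ +
        G * ((τ + 1) / (τ ^ 2 * ν ^ 2) * (n * N * ‖a' - a‖ ^ 2 / 2)) := by
      gcongr
      linarith
    _ = _ := by ring
end

section
/- With η = min{1/(Lλ), 1/√T, 1/L}, batch size B = √T, and prompt sample count I = T^{1/4}, the Fed-BDPL average squared gradient norm bound becomes (1/T) Σ_{t=0}^{T-1} ‖∇F(α_t)‖² ≤ (1/√T)[4G + 2nσ_ψ² + 2nσ_α² + 2(E+1)nσ_ψ²(1+1/K*) + 2(E+1)nσ_α²(1+1/K*)], hence Fed-BDPL converges at rate O(1/√T). -/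
theorem min_one_div_sqrt_eq_of_sq_le {a b T : ℝ} (ha : 0 < a) (hb : 0 < b)
    (haT : a ^ 2 ≤ T) (hbT : b ^ 2 ≤ T) :
    min (1 / a) (min (1 / √T) (1 / b)) = 1 / √T := by
  rw [min_eq_left (one_div_le_one_div_of_le hb ((Real.le_sqrt' hb).2 hbT)),
    min_eq_right (one_div_le_one_div_of_le ha ((Real.le_sqrt' ha).2 haT))]

theorem fed_bdpl_convergence_rate_general
    (S G Lc lam σψ2 σα2 : ℝ) (n E Kstar T : ℕ)
    (hLc : 0 < Lc) (hlam : 1 ≤ lam)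
    (hT1 : (Lc * lam) ^ 2 ≤ T) (hT2 : Lc ^ 2 ≤ T)
    (η B I2 : ℝ)
    (hη : η = min (1 / (Lc * lam)) (min (1 / Real.sqrt T) (1 / Lc)))
    (hBdef : B = Real.sqrt T) (hI2 : I2 = Real.sqrt T)
    -- the Fed-BDPL convergence bound (Theorem 1) for the averaged squared gradient norm S
    (hbound : S ≤ 4 * G / (η * T)
      + (2 * (E + 1) * n * σψ2 * (1 + 1 / (Kstar : ℝ)) + 2 * n * σψ2) / B
      + (2 * (E + 1) * n * σα2 * (1 + 1 / (Kstar : ℝ)) + 2 * n * σα2) / I2) :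
    S ≤ (1 / Real.sqrt T) *
      (4 * G + 2 * n * σψ2 + 2 * n * σα2
        + 2 * (E + 1) * n * σψ2 * (1 + 1 / (Kstar : ℝ))
        + 2 * (E + 1) * n * σα2 * (1 + 1 / (Kstar : ℝ))) := by
  have hLlam : 0 < Lc * lam := mul_pos hLc (by linarith)
  have hηT : η * T = √T := by
    rw [hη, min_one_div_sqrt_eq_of_sq_le hLlam hLc hT1 hT2, one_div_mul_eq_div, Real.div_sqrt]
  rw [hηT, hBdef, hI2] at hbound
  exact hbound.trans_eq (by ring)

/-- Convergence rate of Fed-BDPL: substituting `η = min{1/(Lλ), 1/√T, 1/L}` (with `T` large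
enough that the minimum is `1/√T`), batch size `B = √T`, and prompt sample count
`I = T^{1/4}` (so `I² = √T`) into the Fed-BDPL convergence bound yields an `O(1/√T)`
rate. -/
theorem fed_bdpl_convergence_rate
    (S G Lc lam σψ2 σα2 : ℝ) (n E Kstar T : ℕ)
    (hG : 0 ≤ G) (hLc : 0 < Lc) (hlam : 1 ≤ lam) (hσψ : 0 ≤ σψ2) (hσα : 0 ≤ σα2)
    (hKstar : 1 ≤ Kstar) (hE : 1 ≤ E) (hT : 1 ≤ T)
    (hT1 : (Lc * lam) ^ 2 ≤ T) (hT2 : Lc ^ 2 ≤ T)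
    (η B I2 : ℝ)
    (hη : η = min (1 / (Lc * lam)) (min (1 / Real.sqrt T) (1 / Lc)))
    (hBdef : B = Real.sqrt T) (hI2 : I2 = Real.sqrt T)
    -- the Fed-BDPL convergence bound (Theorem 1) for the averaged squared gradient norm S
    (hbound : S ≤ 4 * G / (η * T)
      + (2 * (E + 1) * n * σψ2 * (1 + 1 / (Kstar : ℝ)) + 2 * n * σψ2) / B
      + (2 * (E + 1) * n * σα2 * (1 + 1 / (Kstar : ℝ)) + 2 * n * σα2) / I2) :
    S ≤ (1 / Real.sqrt T) *
      (4 * G + 2 * n * σψ2 + 2 * n * σα2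
        + 2 * (E + 1) * n * σψ2 * (1 + 1 / (Kstar : ℝ))
        + 2 * (E + 1) * n * σα2 * (1 + 1 / (Kstar : ℝ))) :=
  fed_bdpl_convergence_rate_general S G Lc lam σψ2 σα2 n E Kstar T hLc hlam hT1 hT2 η B I2 hη hBdef
    hI2 hbound
end
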